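/- (L^q norms of the translated derivative of the bubble) Let s ∈ (0,1), let N be an integer with N > 2s, let Ω ⊂ ℝ^N be a bounded open set, let K ⊂ Ω be compact, let q ∈ [1,∞) and i ∈ {1,…,N}. Let V_{x,λ}(y) := ∂_{x_i} U_{x,λ}(y) = −(N−2s) λ^{(N−2s+2)/2} · λ(x_i−y_i)/(1+λ²|x−y|²)^{(N−2s+2)/2}. Define ρ(q,λ) := λ^{(N−2s+2)/2 − N/q} if q > N/(N−2s+1); ρ(q,λ) := λ^{−(N−2s)/2}(log λ)^{(N−2s+1)/N} if q = N/(N−2s+1); and ρ(q,λ) := λ^{−(N−2s)/2} if q < N/(N−2s+1). Then there exist constants 0 < c ≤ C and λ₀ ≥ 2 such that for all x ∈ K and all λ ≥ λ₀, c·ρ(q,λ) ≤ ‖V_{x,λ}‖_{L^q(Ω)} ≤ C·ρ(q,λ). -/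

import Mathlib

open MeasureTheory Real

noncomputable section

abbrev Euc (N : ℕ) := EuclideanSpace ℝ (Fin N)

/-- The `x_i`-derivative of the Aubin–Talenti bubble:
`∂_{x_i} U_{x,λ}(y) = -(N-2s) λ^{(N-2s+2)/2} · λ(x_i-y_i)/(1+λ²|x-y|²)^{(N-2s+2)/2}`. -/
def bubbleDx (N : ℕ) (s : ℝ) (i : Fin N) (x : Euc N) (lam : ℝ) (y : Euc N) : ℝ :=
  -((N : ℝ) - 2 * s) * lam ^ (((N : ℝ) - 2 * s + 2) / 2) *
    (lam * (x i - y i)) / (1 + lam ^ 2 * ‖x - y‖ ^ 2) ^ (((N : ℝ) - 2 * s + 2) / 2)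

/-- The asymptotic rate `ρ(q,λ)` for `‖∂_{x_i} U_{x,λ}‖_{L^q(Ω)}`. -/
def bubbleDxRate (N : ℕ) (s : ℝ) (q lam : ℝ) : ℝ :=
  if (N : ℝ) / ((N : ℝ) - 2 * s + 1) < q then
    lam ^ (((N : ℝ) - 2 * s + 2) / 2 - (N : ℝ) / q)
  else if q = (N : ℝ) / ((N : ℝ) - 2 * s + 1) then
    lam ^ (-(((N : ℝ) - 2 * s) / 2)) * Real.log lam ^ (((N : ℝ) - 2 * s + 1) / (N : ℝ))
  else lam ^ (-(((N : ℝ) - 2 * s) / 2))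

/-!
Write `P = (N - 2s + 2)/2`. Then `|∂_{x_i} U_{x,λ}(y)|^q = |N - 2s|^q λ^{(P+1)q} |x_i - y_i|^q
(1 + λ²|x - y|²)^{-Pq}`, and uniformly in `x ∈ K` the domain is squeezed between two balls
`B(x, r) ⊆ Ω ⊆ B(x, R)`. On a centred ball `|z_i|^q` is comparable to `|z|^q` (the coordinates
play symmetric roles), and polar coordinates followed by `u = λt` turn the integral over `B(0, r)`
into `λ^{-(N+q)} Ψ(λr)` with `Ψ(T) = ∫_0^T u^{N-1+q} (1 + u²)^{-Pq} du`; moreover `Ψ(λr)` is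
comparable to `Ψ(λ)`. For large `T`, `Ψ(T)` behaves like `∫_1^T u^{γ-1} du` with
`γ = N - q(N - 2s + 1)`, that is like `T^γ`, `log T` or `1` according to the sign of `γ`, and the
`q`-th root of `λ^{(P+1)q - N - q}` times this is exactly `ρ(q, λ)` in each of the three regimes.
-/

open Asymptotics Filter Set Topology

section Bounds

variable {α : Type*} {l : Filter α} {f g : α → ℝ}

theorem Asymptotics.isTheta_of_mul_le_of_le_mul {c C : ℝ} (hc : 0 < c) (hg : 0 ≤ᶠ[l] g)
    (hlow : ∀ᶠ x in l, c * g x ≤ f x) (hup : ∀ᶠ x in l, f x ≤ C * g x) : f =Θ[l] g := by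
  refine ⟨IsBigO.of_bound C ?_, IsBigO.of_bound c⁻¹ ?_⟩
  · filter_upwards [hg, hlow, hup] with x hgx hlx hux
    rw [Real.norm_of_nonneg hgx, Real.norm_of_nonneg ((mul_nonneg hc.le hgx).trans hlx)]
    exact hux
  · filter_upwards [hg, hlow] with x hgx hlx
    rw [Real.norm_of_nonneg hgx, Real.norm_of_nonneg ((mul_nonneg hc.le hgx).trans hlx),
      ← div_eq_inv_mul, le_div_iff₀' hc]
    exact hlx

theorem Asymptotics.IsTheta.exists_mul_le_le (h : f =Θ[l] g) (hf : 0 ≤ᶠ[l] f)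
    (hg : 0 ≤ᶠ[l] g) : ∃ c C : ℝ, 0 < c ∧ c ≤ C ∧ ∀ᶠ x in l, c * g x ≤ f x ∧ f x ≤ C * g x := by
  obtain ⟨C, -, hC⟩ := h.1.exists_pos
  obtain ⟨c, hc, hc'⟩ := h.2.exists_pos
  refine ⟨c⁻¹, max c⁻¹ C, inv_pos.2 hc, le_max_left _ _, ?_⟩
  filter_upwards [hf, hg, hC.bound, hc'.bound] with x hfx hgx hup hlow
  rw [Real.norm_of_nonneg hfx, Real.norm_of_nonneg hgx] at hup hlow
  refine ⟨?_, hup.trans (mul_le_mul_of_nonneg_right (le_max_right _ _) hgx)⟩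
  rw [← div_eq_inv_mul, div_le_iff₀' hc]
  exact hlow

end Bounds

def growthRate (γ T : ℝ) : ℝ := if 0 < γ then T ^ γ else if γ = 0 then log T else 1

theorem one_le_growthRate (γ : ℝ) {T : ℝ} (hT : exp 1 ≤ T) : 1 ≤ growthRate γ T := by
  have hT1 : 1 ≤ T := (Real.one_le_exp zero_le_one).trans hT
  unfold growthRate
  split_ifs with hpos
  · exact Real.one_le_rpow hT1 hpos.le
  · rwa [Real.le_log_iff_exp_le (by linarith)]
  · exact le_rfl

theorem integral_one_rpow_eq {r T : ℝ} (hr : r ≠ -1) (hT : 1 ≤ T) :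
    ∫ u in (1 : ℝ)..T, u ^ r = (T ^ (r + 1) - 1) / (r + 1) := by
  rw [integral_rpow (Or.inr ⟨hr, by simp [uIcc_of_le hT]⟩), one_rpow]

theorem integral_one_rpow_isTheta (r : ℝ) :
    (fun T => ∫ u in (1 : ℝ)..T, u ^ r) =Θ[atTop] growthRate (r + 1) := by
  rcases lt_trichotomy (r + 1) 0 with hγ | hγ | hγ
  · have hlim : Tendsto (fun T => ∫ u in (1 : ℝ)..T, u ^ r) atTop (𝓝 (-(1 / (r + 1)))) := by
      have h := ((tendsto_rpow_neg_atTop (neg_pos.2 hγ)).sub_const 1).div_const (r + 1)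
      rw [neg_neg, zero_sub, neg_div] at h
      refine h.congr' ?_
      filter_upwards [eventually_ge_atTop 1] with T hT
      rw [integral_one_rpow_eq (by linarith) hT]
    have hrate : growthRate (r + 1) = fun _ => 1 := by
      funext T; simp [growthRate, hγ.not_gt, hγ.ne]
    have hne : -(1 / (r + 1)) ≠ 0 := by simpa using hγ.ne
    rw [hrate]
    exact ((isEquivalent_const_iff_tendsto hne).2 hlim).isTheta.trans
      (isTheta_const_const hne one_ne_zero)
  · refine IsTheta.of_norm_eventuallyEq ?_
    filter_upwards [eventually_ge_atTop 1] with T hT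
    have hr : r = -1 := by linarith
    have hlog : ∫ u in (1 : ℝ)..T, u ^ r = log T := by
      simp_rw [hr, rpow_neg_one]
      rw [integral_inv_of_pos one_pos (by linarith), div_one]
    rw [hlog, Real.norm_of_nonneg (log_nonneg hT), growthRate, if_neg hγ.not_gt, if_pos hγ]
  · have hrate : growthRate (r + 1) = fun T => T ^ (r + 1) := by
      funext T; simp [growthRate, hγ]
    rw [hrate]
    refine isTheta_of_mul_le_of_le_mul (c := 1 / (2 * (r + 1))) (C := 1 / (r + 1)) (by positivity)
      ?_ ?_ ?_
    · filter_upwards [eventually_ge_atTop 0] with T hT using rpow_nonneg hT _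
    · filter_upwards [eventually_ge_atTop 1, (tendsto_rpow_atTop hγ).eventually_ge_atTop 2]
        with T hT hT2
      rw [integral_one_rpow_eq (by linarith) hT, div_mul_eq_mul_div, one_mul,
        div_le_div_iff₀ (by positivity) hγ]
      nlinarith
    · filter_upwards [eventually_ge_atTop 1] with T hT
      rw [integral_one_rpow_eq (by linarith) hT, div_mul_eq_mul_div, one_mul]
      gcongr
      linarith

def profileIntegral (m p T : ℝ) : ℝ := ∫ u in (0 : ℝ)..T, u ^ m * (1 + u ^ 2) ^ (-p)

section Profile

variable {m p : ℝ}

theorem continuous_one_add_mul_sq_rpow {c : ℝ} (hc : 0 ≤ c) (p : ℝ) :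
    Continuous fun u : ℝ => (1 + c * u ^ 2) ^ (-p) :=
  (by fun_prop : Continuous fun u : ℝ => 1 + c * u ^ 2).rpow_const fun u => Or.inl (by positivity)

theorem continuous_rpow_mul_one_add_mul_sq_rpow (hm : 0 ≤ m) {c : ℝ} (hc : 0 ≤ c) (p : ℝ) :
    Continuous fun u : ℝ => u ^ m * (1 + c * u ^ 2) ^ (-p) :=
  (continuous_id.rpow_const fun _ => Or.inr hm).mul (continuous_one_add_mul_sq_rpow hc p)

theorem continuous_rpow_mul_one_add_sq_rpow (hm : 0 ≤ m) (p : ℝ) :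
    Continuous fun u : ℝ => u ^ m * (1 + u ^ 2) ^ (-p) := by
  simpa using continuous_rpow_mul_one_add_mul_sq_rpow hm zero_le_one p

theorem profileIntegral_eq_add (hm : 0 ≤ m) (T : ℝ) :
    profileIntegral m p T = profileIntegral m p 1 + ∫ u in (1 : ℝ)..T, u ^ m * (1 + u ^ 2) ^ (-p) :=
  (intervalIntegral.integral_add_adjacent_intervals
    ((continuous_rpow_mul_one_add_sq_rpow hm p).intervalIntegrable 0 1)
    ((continuous_rpow_mul_one_add_sq_rpow hm p).intervalIntegrable 1 T)).symm

theorem profileIntegral_nonneg {T : ℝ} (hT : 0 ≤ T) : 0 ≤ profileIntegral m p T :=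
  intervalIntegral.integral_nonneg hT fun u hu => by have := hu.1; positivity

theorem rpow_mul_one_add_sq_rpow_mem_Icc (hp : 0 ≤ p) {u : ℝ} (hu : 1 ≤ u) :
    u ^ m * (1 + u ^ 2) ^ (-p) ∈ Icc (2 ^ (-p) * u ^ (m - 2 * p)) (u ^ (m - 2 * p)) := by
  have hu0 : 0 < u := by linarith
  have hsq : (u ^ 2) ^ (-p) = u ^ (-(2 * p)) := by
    rw [← rpow_natCast, ← rpow_mul hu0.le]; push_cast; ring_nf
  have hsplit : u ^ (m - 2 * p) = u ^ m * (u ^ 2) ^ (-p) := by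
    rw [hsq, ← rpow_add hu0]; ring_nf
  constructor
  · have h : (2 * u ^ 2) ^ (-p) ≤ (1 + u ^ 2) ^ (-p) :=
      rpow_le_rpow_of_nonpos (by positivity) (by nlinarith) (by linarith)
    rw [mul_rpow zero_le_two (by positivity)] at h
    rw [hsplit]
    nlinarith [rpow_nonneg hu0.le m]
  · rw [hsplit]
    gcongr ?_ * ?_
    exact rpow_le_rpow_of_nonpos (by positivity) (by linarith) (by linarith)

theorem profileIntegral_isTheta (hm : 0 ≤ m) (hp : 0 ≤ p) :
    profileIntegral m p =Θ[atTop] growthRate (m - 2 * p + 1) := by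
  set G : ℝ → ℝ := fun T => ∫ u in (1 : ℝ)..T, u ^ m * (1 + u ^ 2) ^ (-p)
  have hcont := continuous_rpow_mul_one_add_sq_rpow hm p
  have hpow_int : ∀ T, 1 ≤ T → IntervalIntegrable (fun u : ℝ => u ^ (m - 2 * p)) volume 1 T :=
    fun T hT => (continuousOn_id.rpow_const fun u hu => Or.inl (by
      rw [uIcc_of_le hT] at hu; exact (zero_lt_one.trans_le hu.1).ne')).intervalIntegrable
  have hG : G =Θ[atTop] growthRate (m - 2 * p + 1) := by
    refine (isTheta_of_mul_le_of_le_mul (c := 2 ^ (-p)) (C := 1) (by positivity) ?_ ?_ ?_).trans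
      (integral_one_rpow_isTheta (m - 2 * p))
    · filter_upwards [eventually_ge_atTop 1] with T hT
      exact intervalIntegral.integral_nonneg hT fun u hu => rpow_nonneg (by linarith [hu.1]) _
    · filter_upwards [eventually_ge_atTop 1] with T hT
      rw [← intervalIntegral.integral_const_mul]
      exact intervalIntegral.integral_mono_on hT ((hpow_int T hT).const_mul _)
        (hcont.intervalIntegrable 1 T) fun u hu =>
          (rpow_mul_one_add_sq_rpow_mem_Icc hp hu.1).1
    · filter_upwards [eventually_ge_atTop 1] with T hT
      rw [one_mul]
      exact intervalIntegral.integral_mono_on hT (hcont.intervalIntegrable 1 T) (hpow_int T hT)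
        fun u hu => (rpow_mul_one_add_sq_rpow_mem_Icc hp hu.1).2
  have hconst : (fun _ => profileIntegral m p 1) =O[atTop] growthRate (m - 2 * p + 1) :=
    IsBigO.of_bound ‖profileIntegral m p 1‖ <| by
      filter_upwards [eventually_ge_atTop (exp 1)] with T hT
      rw [Real.norm_of_nonneg (zero_le_one.trans (one_le_growthRate _ hT))]
      exact le_mul_of_one_le_right (norm_nonneg _) (one_le_growthRate _ hT)
  have hsplit : profileIntegral m p = fun T => profileIntegral m p 1 + G T :=
    funext (profileIntegral_eq_add hm)
  refine ⟨hsplit ▸ hconst.add hG.1, hG.2.trans (IsBigO.of_bound' ?_)⟩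
  filter_upwards [eventually_ge_atTop 1] with T hT
  have hG0 : 0 ≤ G T := intervalIntegral.integral_nonneg hT fun u hu => by
    have : (0 : ℝ) ≤ u := zero_le_one.trans hu.1
    positivity
  rw [Real.norm_of_nonneg hG0, Real.norm_of_nonneg (profileIntegral_nonneg (zero_le_one.trans hT)),
    profileIntegral_eq_add hm]
  linarith [profileIntegral_nonneg (m := m) (p := p) zero_le_one]

theorem integral_rpow_mul_one_add_mul_sq_rpow {lam r : ℝ} (hlam : 0 < lam) (hr : 0 ≤ r) :
    ∫ t in (0 : ℝ)..r, t ^ m * (1 + lam ^ 2 * t ^ 2) ^ (-p) =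
      lam ^ (-(m + 1)) * profileIntegral m p (lam * r) := by
  have hcomp := intervalIntegral.integral_comp_mul_left
    (fun u : ℝ => u ^ m * (1 + u ^ 2) ^ (-p)) hlam.ne' (a := 0) (b := r)
  rw [mul_zero] at hcomp
  have hscale : ∫ t in (0 : ℝ)..r, (lam * t) ^ m * (1 + (lam * t) ^ 2) ^ (-p) =
      lam ^ m * ∫ t in (0 : ℝ)..r, t ^ m * (1 + lam ^ 2 * t ^ 2) ^ (-p) := by
    rw [← intervalIntegral.integral_const_mul]
    refine intervalIntegral.integral_congr fun t ht => ?_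
    rw [uIcc_of_le hr] at ht
    simp only [mul_rpow hlam.le ht.1, mul_pow, mul_assoc]
  rw [profileIntegral, ← smul_eq_mul (lam ^ (-(m + 1))), neg_add, rpow_add hlam, rpow_neg_one,
    mul_smul, ← hcomp, hscale, smul_eq_mul, rpow_neg hlam.le, inv_mul_cancel_left₀
      (rpow_pos_of_pos hlam m).ne']

theorem profileIntegral_mul_le {ρ T : ℝ} (hm : 0 ≤ m) (hp : 0 ≤ p) (hρ : 1 ≤ ρ)
    (hT : 0 ≤ T) : profileIntegral m p (ρ * T) ≤ ρ ^ (m + 1) * profileIntegral m p T := by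
  have hρ0 : 0 < ρ := by linarith
  have hle : ∫ t in (0 : ℝ)..T, t ^ m * (1 + ρ ^ 2 * t ^ 2) ^ (-p) ≤ profileIntegral m p T := by
    refine intervalIntegral.integral_mono_on hT
      ((continuous_rpow_mul_one_add_mul_sq_rpow hm (sq_nonneg ρ) p).intervalIntegrable _ _)
      ((continuous_rpow_mul_one_add_sq_rpow hm p).intervalIntegrable _ _) fun t ht => ?_
    have := ht.1
    have hρt : t ^ 2 ≤ ρ ^ 2 * t ^ 2 := le_mul_of_one_le_left (sq_nonneg t) (one_le_pow₀ hρ)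
    gcongr ?_ * ?_
    exact rpow_le_rpow_of_nonpos (by positivity) (by linarith) (by linarith)
  rw [integral_rpow_mul_one_add_mul_sq_rpow hρ0 hT, rpow_neg hρ0.le, inv_mul_le_iff₀
    (rpow_pos_of_pos hρ0 _)] at hle
  exact hle

theorem rpow_mul_profileIntegral_le {r T : ℝ} (hm : 0 ≤ m) (hp : 0 ≤ p) (hr : 0 < r)
    (hr1 : r ≤ 1) (hT : 0 ≤ T) :
    r ^ (m + 1) * profileIntegral m p T ≤ profileIntegral m p (r * T) := by
  have h := profileIntegral_mul_le hm hp (one_le_inv_iff₀.2 ⟨hr, hr1⟩) (mul_nonneg hr.le hT)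
    (m := m) (p := p)
  rwa [inv_mul_cancel_left₀ hr.ne', inv_rpow hr.le, ← div_eq_inv_mul,
    le_div_iff₀' (rpow_pos_of_pos hr _)] at h

end Profile

open Metric

theorem exists_ball_subset_and_subset_ball {X : Type*} [PseudoMetricSpace X] {Ω K : Set X}
    (hΩo : IsOpen Ω) (hΩb : Bornology.IsBounded Ω) (hK : IsCompact K) (hKΩ : K ⊆ Ω) :
    ∃ r R : ℝ, 0 < r ∧ r ≤ 1 ∧ 1 ≤ R ∧ ∀ x ∈ K, ball x r ⊆ Ω ∧ Ω ⊆ ball x R := by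
  obtain ⟨δ, hδ, hδΩ⟩ := hK.exists_thickening_subset_open hΩo hKΩ
  obtain ⟨C, hC⟩ := isBounded_iff.1 hΩb
  refine ⟨min δ 1, max (C + 1) 1, lt_min hδ one_pos, min_le_right _ _, le_max_right _ _,
    fun x hx => ⟨?_, fun y hy => ?_⟩⟩
  · exact (ball_subset_ball (min_le_left _ _)).trans ((ball_subset_thickening hx δ).trans hδΩ)
  · rw [mem_ball]
    linarith [hC hy (hKΩ hx), le_max_left (C + 1) 1]

section HaarBall

variable {E : Type*} [NormedAddCommGroup E] [MeasurableSpace E] [BorelSpace E]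
  (μ : Measure E) [μ.IsAddHaarMeasure]

theorem setIntegral_ball_comp_sub_left [μ.IsNegInvariant] (F : E → ℝ) (x : E) (r : ℝ) :
    ∫ y in ball x r, F (x - y) ∂μ = ∫ z in ball 0 r, F z ∂μ := by
  have hpre : (fun y => x - y) ⁻¹' ball 0 r = ball x r := by
    ext y; simp [dist_eq_norm, norm_sub_rev]
  rw [← hpre]
  exact (μ.measurePreserving_sub_left x).setIntegral_preimage_emb
    (Homeomorph.subLeft x).measurableEmbedding F _

theorem setIntegral_comp_sub_left_mem_Icc [ProperSpace E] [μ.IsNegInvariant] {F : E → ℝ}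
    (hF : Continuous F) (hF0 : ∀ z, 0 ≤ F z) {Ω : Set E} {x : E} {r R : ℝ}
    (hr : ball x r ⊆ Ω) (hR : Ω ⊆ ball x R) :
    ∫ y in Ω, F (x - y) ∂μ ∈ Icc (∫ z in ball 0 r, F z ∂μ) (∫ z in ball 0 R, F z ∂μ) := by
  have hint : IntegrableOn (fun y => F (x - y)) (ball x R) μ :=
    (hF.comp (continuous_sub_left x)).locallyIntegrable.integrableOn_isCompact
      (isCompact_closedBall x R) |>.mono_set ball_subset_closedBall
  rw [← setIntegral_ball_comp_sub_left μ F x r, ← setIntegral_ball_comp_sub_left μ F x R]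
  exact ⟨setIntegral_mono_set (hint.mono_set hR) (ae_of_all _ fun _ => hF0 _)
      hr.eventuallyLE,
    setIntegral_mono_set hint (ae_of_all _ fun _ => hF0 _) hR.eventuallyLE⟩

variable [NormedSpace ℝ E] [FiniteDimensional ℝ E] [Nontrivial E]

theorem setIntegral_ball_fun_norm (f : ℝ → ℝ) (r : ℝ) :
    ∫ z in ball 0 r, f ‖z‖ ∂μ = Module.finrank ℝ E * μ.real (ball 0 1) *
      ∫ t in Ioo 0 r, t ^ (Module.finrank ℝ E - 1) * f t := by
  have h := integral_fun_norm_addHaar μ ((Iio r).indicator f)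
  have hball : (fun z : E => (Iio r).indicator f ‖z‖) = (ball 0 r).indicator fun z => f ‖z‖ := by
    ext z; simp [indicator]
  have hIoo : (fun t : ℝ => t ^ (Module.finrank ℝ E - 1) • (Iio r).indicator f t) =
      (Iio r).indicator fun t => t ^ (Module.finrank ℝ E - 1) * f t := by
    ext t; simp [indicator]
  rw [hball, integral_indicator measurableSet_ball, hIoo,
    setIntegral_indicator measurableSet_Iio, Ioi_inter_Iio, nsmul_eq_mul, smul_eq_mul] at h
  rw [h, mul_assoc]

end HaarBall

section Coordinates

variable {ι : Type*} [Fintype ι]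

theorem EuclideanSpace.norm_rpow_le_card_rpow_mul_sum (z : EuclideanSpace ℝ ι) {q : ℝ}
    (hq : 1 ≤ q) : ‖z‖ ^ q ≤ (Fintype.card ι : ℝ) ^ (q - 1) * ∑ j, |z j| ^ q := by
  have hsq : ‖z‖ ^ 2 ≤ (∑ j, |z j|) ^ 2 := by
    rw [EuclideanSpace.real_norm_sq_eq]
    simp_rw [← sq_abs (z _)]
    exact Finset.sum_sq_le_sq_sum_of_nonneg fun j _ => abs_nonneg _
  have hl1 : ‖z‖ ≤ ∑ j, |z j| :=
    (pow_le_pow_iff_left₀ (norm_nonneg z) (Finset.sum_nonneg fun j _ => abs_nonneg _)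
      two_ne_zero).1 hsq
  calc ‖z‖ ^ q ≤ (∑ j, |z j|) ^ q := rpow_le_rpow (norm_nonneg z) hl1 (by linarith)
    _ ≤ _ := by simpa using Real.rpow_sum_le_const_mul_sum_rpow Finset.univ (fun j => z j) hq

theorem setIntegral_ball_comp_apply_norm_eq [DecidableEq ι] (F : ℝ → ℝ → ℝ) (i j : ι) (r : ℝ) :
    ∫ z in ball (0 : EuclideanSpace ℝ ι) r, F (z i) ‖z‖ =
      ∫ z in ball (0 : EuclideanSpace ℝ ι) r, F (z j) ‖z‖ := by
  set e := LinearIsometryEquiv.piLpCongrLeft 2 ℝ ℝ (Equiv.swap i j)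
  have hpre : e ⁻¹' ball 0 r = ball 0 r := by ext z; simp
  have happly : ∀ z : EuclideanSpace ℝ ι, e z i = z j := fun z => by
    simp [e, LinearIsometryEquiv.piLpCongrLeft_apply, Equiv.piCongrLeft'_apply]
  rw [← e.measurePreserving.setIntegral_preimage_emb e.toHomeomorph.measurableEmbedding, hpre]
  simp only [happly, e.norm_map]

variable {w : ℝ → ℝ} {q : ℝ}

theorem integrableOn_ball_rpow_mul (hw : Continuous w) {f : EuclideanSpace ℝ ι → ℝ}
    (hf : Continuous f) (hq : 0 ≤ q) (r : ℝ) :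
    IntegrableOn (fun z => f z ^ q * w ‖z‖) (ball 0 r) :=
  ((hf.rpow_const fun _ => Or.inr hq).mul (hw.comp continuous_norm)).locallyIntegrable
    |>.integrableOn_isCompact (isCompact_closedBall 0 r) |>.mono_set ball_subset_closedBall

theorem setIntegral_ball_abs_apply_rpow_mul_le (hw : Continuous w) (hw0 : ∀ t, 0 ≤ w t)
    (hq : 0 ≤ q) (i : ι) (r : ℝ) :
    ∫ z in ball (0 : EuclideanSpace ℝ ι) r, |z i| ^ q * w ‖z‖ ≤
      ∫ z in ball (0 : EuclideanSpace ℝ ι) r, ‖z‖ ^ q * w ‖z‖ :=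
  setIntegral_mono_on (integrableOn_ball_rpow_mul hw (PiLp.continuous_apply 2 _ i).abs hq r)
    (integrableOn_ball_rpow_mul hw continuous_norm hq r) measurableSet_ball fun z _ =>
      mul_le_mul_of_nonneg_right (rpow_le_rpow (abs_nonneg _) (PiLp.norm_apply_le z i) hq) (hw0 _)

theorem setIntegral_ball_norm_rpow_mul_le (hw : Continuous w) (hw0 : ∀ t, 0 ≤ w t)
    (hq : 1 ≤ q) (i : ι) (r : ℝ) :
    ∫ z in ball (0 : EuclideanSpace ℝ ι) r, ‖z‖ ^ q * w ‖z‖ ≤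
      (Fintype.card ι : ℝ) ^ q * ∫ z in ball (0 : EuclideanSpace ℝ ι) r, |z i| ^ q * w ‖z‖ := by
  classical
  have : Nonempty ι := ⟨i⟩
  set B := ball (0 : EuclideanSpace ℝ ι) r
  set n : ℝ := (Fintype.card ι : ℝ)
  have hn : n ≠ 0 := Nat.cast_ne_zero.2 Fintype.card_ne_zero
  have hint : ∀ j : ι, IntegrableOn (fun z : EuclideanSpace ℝ ι => |z j| ^ q * w ‖z‖) B :=
    fun j => integrableOn_ball_rpow_mul hw (PiLp.continuous_apply 2 _ j).abs (by linarith) r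
  calc ∫ z in B, ‖z‖ ^ q * w ‖z‖ ≤ ∫ z in B, n ^ (q - 1) * ∑ j, |z j| ^ q * w ‖z‖ := by
        refine setIntegral_mono_on (integrableOn_ball_rpow_mul hw continuous_norm (by linarith) r)
          ((integrable_finsetSum _ fun j _ => hint j).const_mul _) measurableSet_ball
          fun z _ => ?_
        rw [← Finset.sum_mul, ← mul_assoc]
        exact mul_le_mul_of_nonneg_right (EuclideanSpace.norm_rpow_le_card_rpow_mul_sum z hq)
          (hw0 _)
    _ = n ^ (q - 1) * ∑ _j : ι, ∫ z in B, |z i| ^ q * w ‖z‖ := by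
        rw [integral_const_mul, integral_finsetSum _ fun j _ => hint j]
        simp_rw [B, setIntegral_ball_comp_apply_norm_eq (fun a t => |a| ^ q * w t) _ i]
    _ = n ^ q * ∫ z in B, |z i| ^ q * w ‖z‖ := by
        rw [Finset.sum_const, Finset.card_univ, nsmul_eq_mul, ← mul_assoc, rpow_sub_one hn,
          div_mul_cancel₀ _ hn]

end Coordinates

theorem setIntegral_ball_norm_rpow_mul_one_add_mul_sq_rpow {N : ℕ} (hN : 0 < N) {q p lam r : ℝ}
    (hlam : 0 < lam) (hr : 0 ≤ r) :
    ∫ z in ball (0 : Euc N) r, ‖z‖ ^ q * (1 + lam ^ 2 * ‖z‖ ^ 2) ^ (-p) =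
      N * volume.real (ball (0 : Euc N) 1) *
        (lam ^ (-((N : ℝ) + q)) * profileIntegral (N - 1 + q) p (lam * r)) := by
  have : Nonempty (Fin N) := ⟨⟨0, hN⟩⟩
  rw [setIntegral_ball_fun_norm volume (fun t => t ^ q * (1 + lam ^ 2 * t ^ 2) ^ (-p)) r,
    finrank_euclideanSpace_fin]
  congr 1
  rw [show -((N : ℝ) + q) = -((N - 1 + q) + 1) by ring,
    ← integral_rpow_mul_one_add_mul_sq_rpow hlam hr, intervalIntegral.integral_of_le hr,
    integral_Ioc_eq_integral_Ioo]
  refine setIntegral_congr_fun measurableSet_Ioo fun t ht => ?_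
  rw [← mul_assoc, ← rpow_natCast, ← rpow_add ht.1, Nat.cast_sub hN, Nat.cast_one]

theorem setIntegral_ball_abs_apply_rpow_weight_mem_Icc {N : ℕ} (i : Fin N) {q p lam r : ℝ}
    (hq : 1 ≤ q) (hlam : 0 < lam) (hr : 0 ≤ r) :
    ∫ z in ball (0 : Euc N) r, |z i| ^ q * (1 + lam ^ 2 * ‖z‖ ^ 2) ^ (-p) ∈
      Icc (N * volume.real (ball (0 : Euc N) 1) / N ^ q *
          (lam ^ (-((N : ℝ) + q)) * profileIntegral (N - 1 + q) p (lam * r)))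
        (N * volume.real (ball (0 : Euc N) 1) *
          (lam ^ (-((N : ℝ) + q)) * profileIntegral (N - 1 + q) p (lam * r))) := by
  have hw := continuous_one_add_mul_sq_rpow (sq_nonneg lam) p
  have hw0 : ∀ t : ℝ, 0 ≤ (1 + lam ^ 2 * t ^ 2) ^ (-p) := fun t => by positivity
  have hrad := setIntegral_ball_norm_rpow_mul_one_add_mul_sq_rpow i.pos (p := p) (q := q) hlam hr
  have hup := setIntegral_ball_abs_apply_rpow_mul_le hw hw0 (q := q) (by linarith) i r
  have hlow := setIntegral_ball_norm_rpow_mul_le hw hw0 hq i r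
  simp only [Fintype.card_fin] at hlow
  rw [hrad] at hup hlow
  refine ⟨?_, hup⟩
  rw [div_mul_eq_mul_div, div_le_iff₀' (by have := i.pos; positivity)]
  exact hlow

theorem setIntegral_abs_sub_apply_rpow_weight_mem_Icc {N : ℕ} {Ω : Set (Euc N)} {x : Euc N}
    {r R : ℝ} (hr : 0 < r) (hr1 : r ≤ 1) (hR1 : 1 ≤ R) (hrΩ : ball x r ⊆ Ω) (hΩR : Ω ⊆ ball x R)
    (i : Fin N) {q p lam : ℝ} (hq : 1 ≤ q) (hp : 0 ≤ p) (hlam : 0 < lam) :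
    ∫ y in Ω, |x i - y i| ^ q * (1 + lam ^ 2 * ‖x - y‖ ^ 2) ^ (-p) ∈
      Icc (N * volume.real (ball (0 : Euc N) 1) / N ^ q * r ^ ((N : ℝ) - 1 + q + 1) *
          (lam ^ (-((N : ℝ) + q)) * profileIntegral (N - 1 + q) p lam))
        (N * volume.real (ball (0 : Euc N) 1) * R ^ ((N : ℝ) - 1 + q + 1) *
          (lam ^ (-((N : ℝ) + q)) * profileIntegral (N - 1 + q) p lam)) := by
  set κ : ℝ := N * volume.real (ball (0 : Euc N) 1)
  have hm : 0 ≤ (N : ℝ) - 1 + q := by linarith [show (1 : ℝ) ≤ N by exact_mod_cast i.pos]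
  have hF : Continuous fun z : Euc N => |z i| ^ q * (1 + lam ^ 2 * ‖z‖ ^ 2) ^ (-p) :=
    ((PiLp.continuous_apply 2 _ i).abs.rpow_const fun _ => Or.inr (by linarith)).mul
      ((continuous_one_add_mul_sq_rpow (sq_nonneg lam) p).comp continuous_norm)
  have hΩ := setIntegral_comp_sub_left_mem_Icc volume hF (fun _ => by positivity) hrΩ hΩR
  have hr' := setIntegral_ball_abs_apply_rpow_weight_mem_Icc i (p := p) hq hlam hr.le
  have hR' := setIntegral_ball_abs_apply_rpow_weight_mem_Icc i (p := p) hq hlam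
    (zero_le_one.trans hR1)
  constructor
  · calc κ / N ^ q * r ^ ((N : ℝ) - 1 + q + 1) *
          (lam ^ (-((N : ℝ) + q)) * profileIntegral (N - 1 + q) p lam)
        = κ / N ^ q * (lam ^ (-((N : ℝ) + q)) *
          (r ^ ((N : ℝ) - 1 + q + 1) * profileIntegral (N - 1 + q) p lam)) := by ring
      _ ≤ κ / N ^ q * (lam ^ (-((N : ℝ) + q)) * profileIntegral (N - 1 + q) p (lam * r)) := by
        rw [mul_comm lam r]
        gcongr
        exact rpow_mul_profileIntegral_le hm hp hr hr1 hlam.le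
      _ ≤ _ := hr'.1.trans hΩ.1
  · calc _ ≤ κ * (lam ^ (-((N : ℝ) + q)) * profileIntegral (N - 1 + q) p (lam * R)) :=
          hΩ.2.trans hR'.2
      _ ≤ κ * (lam ^ (-((N : ℝ) + q)) *
          (R ^ ((N : ℝ) - 1 + q + 1) * profileIntegral (N - 1 + q) p lam)) := by
        rw [mul_comm lam R]
        gcongr
        exact profileIntegral_mul_le hm hp hR1 hlam.le
      _ = _ := by ring

theorem setIntegral_abs_sub_apply_rpow_weight_isTheta {N : ℕ} {Ω K : Set (Euc N)}
    (hΩo : IsOpen Ω) (hΩb : Bornology.IsBounded Ω) (hK : IsCompact K) (hKΩ : K ⊆ Ω) (i : Fin N)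
    {q p : ℝ} (hq : 1 ≤ q) (hp : 0 ≤ p) :
    (fun z : ℝ × Euc N => ∫ y in Ω, |z.2 i - y i| ^ q * (1 + z.1 ^ 2 * ‖z.2 - y‖ ^ 2) ^ (-p))
      =Θ[atTop ×ˢ 𝓟 K]
        fun z => z.1 ^ (-((N : ℝ) + q)) * profileIntegral (N - 1 + q) p z.1 := by
  obtain ⟨r, R, hr, hr1, hR1, hball⟩ := exists_ball_subset_and_subset_ball hΩo hΩb hK hKΩ
  have hpos : ∀ᶠ z : ℝ × Euc N in atTop ×ˢ 𝓟 K, 0 < z.1 ∧ z.2 ∈ K :=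
    prod_mem_prod (Ioi_mem_atTop 0) (mem_principal_self K)
  have hbounds : ∀ᶠ z : ℝ × Euc N in atTop ×ˢ 𝓟 K, _ :=
    hpos.mono fun z hz => setIntegral_abs_sub_apply_rpow_weight_mem_Icc hr hr1 hR1
      (hball z.2 hz.2).1 (hball z.2 hz.2).2 i hq hp hz.1
  have hN : (0 : ℝ) < N := Nat.cast_pos.2 i.pos
  have hκ : 0 < (N : ℝ) * volume.real (ball (0 : Euc N) 1) :=
    mul_pos hN (ENNReal.toReal_pos (measure_ball_pos _ _ one_pos).ne' measure_ball_lt_top.ne)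
  refine isTheta_of_mul_le_of_le_mul
    (mul_pos (div_pos hκ (rpow_pos_of_pos hN q)) (rpow_pos_of_pos hr _)) ?_
    (hbounds.mono fun _ h => h.1)
    (hbounds.mono fun _ h => h.2)
  filter_upwards [hpos] with z hz
  exact mul_nonneg (rpow_nonneg hz.1.le _) (profileIntegral_nonneg hz.1.le)

theorem abs_bubbleDx_rpow (N : ℕ) (s : ℝ) (i : Fin N) (x : Euc N) {lam q : ℝ} (hlam : 0 < lam)
    (y : Euc N) :
    |bubbleDx N s i x lam y| ^ q =
      |(N : ℝ) - 2 * s| ^ q * (lam ^ ((((N : ℝ) - 2 * s + 2) / 2 + 1) * q) *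
        (|x i - y i| ^ q * (1 + lam ^ 2 * ‖x - y‖ ^ 2) ^ (-(((N : ℝ) - 2 * s + 2) / 2 * q)))) := by
  have hD : 0 < 1 + lam ^ 2 * ‖x - y‖ ^ 2 := by positivity
  rw [bubbleDx, abs_div, abs_mul, abs_mul, abs_mul, abs_neg, abs_of_pos (rpow_pos_of_pos hlam _),
    abs_of_pos hlam, abs_of_pos (rpow_pos_of_pos hD _), div_rpow (by positivity) (by positivity),
    mul_rpow (by positivity) (by positivity), mul_rpow (by positivity) (by positivity),
    mul_rpow hlam.le (abs_nonneg _),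
    ← rpow_mul hlam.le, ← rpow_mul hD.le, rpow_neg hD.le, add_one_mul, rpow_add hlam]
  ring

theorem bubbleDxRate_nonneg (N : ℕ) (s q : ℝ) {lam : ℝ} (hlam : 1 ≤ lam) :
    0 ≤ bubbleDxRate N s q lam := by
  have hlam0 : 0 ≤ lam := by linarith
  unfold bubbleDxRate
  split_ifs
  · exact rpow_nonneg hlam0 _
  · exact mul_nonneg (rpow_nonneg hlam0 _) (rpow_nonneg (log_nonneg hlam) _)
  · exact rpow_nonneg hlam0 _

theorem bubbleDxRate_eq_rpow {N : ℕ} {s q lam : ℝ} (hN : 2 * s < N) (hq : 0 < q) (hlam : 1 ≤ lam) :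
    bubbleDxRate N s q lam =
      (lam ^ ((((N : ℝ) - 2 * s + 2) / 2 + 1) * q) *
        (lam ^ (-((N : ℝ) + q)) * growthRate (N - q * ((N : ℝ) - 2 * s + 1)) lam)) ^ (1 / q) := by
  have hlam0 : 0 < lam := by linarith
  have hA : 0 < (N : ℝ) - 2 * s + 1 := by linarith
  have hG : 0 ≤ growthRate (N - q * ((N : ℝ) - 2 * s + 1)) lam := by
    unfold growthRate; split_ifs
    · exact rpow_nonneg hlam0.le _
    · exact log_nonneg hlam
    · exact zero_le_one
  rw [← mul_assoc, ← rpow_add hlam0, mul_rpow (rpow_nonneg hlam0.le _) hG, ← rpow_mul hlam0.le]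
  unfold bubbleDxRate growthRate
  rcases lt_trichotomy q ((N : ℝ) / ((N : ℝ) - 2 * s + 1)) with hlt | heq | hgt
  · have hγ : 0 < (N : ℝ) - q * ((N : ℝ) - 2 * s + 1) := by
      rw [lt_div_iff₀ hA] at hlt; linarith
    rw [if_neg (not_lt.2 hlt.le), if_neg hlt.ne, if_pos hγ, ← rpow_mul hlam0.le, ← rpow_add hlam0]
    congr 1
    field_simp
    ring
  · have hγ : (N : ℝ) - q * ((N : ℝ) - 2 * s + 1) = 0 := by
      rw [heq, div_mul_cancel₀ _ hA.ne']; ring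
    rw [if_neg (not_lt.2 heq.le), if_pos heq, if_neg hγ.not_gt, if_pos hγ]
    have hN0 : (N : ℝ) ≠ 0 := fun h => by rw [h, zero_div] at heq; linarith
    congr 2
    · rw [heq]; field_simp; ring
    · rw [heq, one_div_div]
  · have hγ : (N : ℝ) - q * ((N : ℝ) - 2 * s + 1) < 0 := by
      rw [div_lt_iff₀ hA] at hgt; linarith
    rw [if_pos hgt, if_neg hγ.not_gt, if_neg hγ.ne, one_rpow, mul_one]
    congr 1
    field_simp
    ring

def bubbleDxModel (N : ℕ) (s q lam : ℝ) : ℝ :=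
  lam ^ ((((N : ℝ) - 2 * s + 2) / 2 + 1) * q) *
    (lam ^ (-((N : ℝ) + q)) * profileIntegral (N - 1 + q) (((N : ℝ) - 2 * s + 2) / 2 * q) lam)

theorem bubbleDxModel_nonneg (N : ℕ) (s q : ℝ) {lam : ℝ} (hlam : 0 ≤ lam) :
    0 ≤ bubbleDxModel N s q lam :=
  mul_nonneg (rpow_nonneg hlam _) (mul_nonneg (rpow_nonneg hlam _) (profileIntegral_nonneg hlam))

theorem rpow_bubbleDxModel_isTheta {N : ℕ} {s q : ℝ} (hN : 2 * s < N) (hq : 1 ≤ q) :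
    (fun lam => bubbleDxModel N s q lam ^ (1 / q)) =Θ[atTop] bubbleDxRate N s q := by
  have hΨ := profileIntegral_isTheta (m := (N : ℝ) - 1 + q) (p := ((N : ℝ) - 2 * s + 2) / 2 * q)
    (by linarith [N.cast_nonneg (α := ℝ)]) (by nlinarith)
  rw [show (N : ℝ) - 1 + q - 2 * (((N : ℝ) - 2 * s + 2) / 2 * q) + 1 =
    N - q * ((N : ℝ) - 2 * s + 1) by ring] at hΨ
  refine (((isTheta_refl _ _).mul ((isTheta_refl _ _).mul hΨ)).rpow ?_ ?_).trans_eventuallyEq ?_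
  · filter_upwards [eventually_ge_atTop 0] with lam hlam using bubbleDxModel_nonneg N s q hlam
  · filter_upwards [eventually_ge_atTop (exp 1)] with lam hlam
    have hlam0 : 0 ≤ lam := (exp_pos 1).le.trans hlam
    exact mul_nonneg (rpow_nonneg hlam0 _) (mul_nonneg (rpow_nonneg hlam0 _)
      (zero_le_one.trans (one_le_growthRate _ hlam)))
  · filter_upwards [eventually_ge_atTop 1] with lam hlam
    exact (bubbleDxRate_eq_rpow hN (by linarith) hlam).symm

theorem integral_abs_bubbleDx_rpow_isTheta {N : ℕ} {s : ℝ} (hN : 2 * s < N) {Ω K : Set (Euc N)}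
    (hΩo : IsOpen Ω) (hΩb : Bornology.IsBounded Ω) (hK : IsCompact K) (hKΩ : K ⊆ Ω) (i : Fin N)
    {q : ℝ} (hq : 1 ≤ q) :
    (fun z : ℝ × Euc N => ∫ y in Ω, |bubbleDx N s i z.2 z.1 y| ^ q) =Θ[atTop ×ˢ 𝓟 K]
      fun z => bubbleDxModel N s q z.1 := by
  have hA : |(N : ℝ) - 2 * s| ^ q ≠ 0 := (rpow_pos_of_pos (abs_pos.2 (by linarith)) q).ne'
  refine EventuallyEq.trans_isTheta ?_ ((isTheta_const_mul_left hA).2 ((isTheta_refl _ _).mul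
    (setIntegral_abs_sub_apply_rpow_weight_isTheta hΩo hΩb hK hKΩ i hq (by nlinarith))))
  filter_upwards [prod_mem_prod (Ioi_mem_atTop 0) (univ_mem : univ ∈ 𝓟 K)] with z hz
  simp_rw [abs_bubbleDx_rpow N s i z.2 hz.1]
  rw [integral_const_mul, integral_const_mul]

theorem statement10_general (N : ℕ) (s : ℝ) (hN : 2 * s < (N : ℝ))
    (Ω : Set (Euc N)) (hΩo : IsOpen Ω) (hΩb : Bornology.IsBounded Ω)
    (K : Set (Euc N)) (hK : IsCompact K) (hKΩ : K ⊆ Ω)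
    (q : ℝ) (hq : 1 ≤ q) (i : Fin N) :
    ∃ c C lam0 : ℝ, 0 < c ∧ c ≤ C ∧ 2 ≤ lam0 ∧
      ∀ x ∈ K, ∀ lam : ℝ, lam0 ≤ lam →
        c * bubbleDxRate N s q lam ≤
            (∫ y in Ω, |bubbleDx N s i x lam y| ^ q) ^ (1 / q) ∧
          (∫ y in Ω, |bubbleDx N s i x lam y| ^ q) ^ (1 / q) ≤ C * bubbleDxRate N s q lam := by
  have hJ0 : ∀ z : ℝ × Euc N, 0 ≤ ∫ y in Ω, |bubbleDx N s i z.2 z.1 y| ^ q := fun z =>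
    integral_nonneg fun y => rpow_nonneg (abs_nonneg _) q
  have hmodel0 : ∀ᶠ z : ℝ × Euc N in atTop ×ˢ 𝓟 K, 0 ≤ bubbleDxModel N s q z.1 :=
    (eventually_ge_atTop 0).prod_inl _ |>.mono fun z hz => bubbleDxModel_nonneg N s q hz
  have hrate0 : ∀ᶠ z : ℝ × Euc N in atTop ×ˢ 𝓟 K, 0 ≤ bubbleDxRate N s q z.1 :=
    (eventually_ge_atTop 1).prod_inl _ |>.mono fun z hz => bubbleDxRate_nonneg N s q hz
  have hnorm := ((integral_abs_bubbleDx_rpow_isTheta hN hΩo hΩb hK hKΩ i hq).rpow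
    (.of_forall hJ0) hmodel0 (r := 1 / q)).trans
      ((rpow_bubbleDxModel_isTheta hN hq).comp_fst (𝓟 K))
  obtain ⟨c, C, hc, hcC, hbound⟩ :=
    hnorm.exists_mul_le_le (.of_forall fun z => rpow_nonneg (hJ0 z) _) hrate0
  obtain ⟨lam0, hlam0⟩ := eventually_atTop.1 (eventually_prod_principal_iff.1 hbound)
  exact ⟨c, C, max lam0 2, hc, hcC, le_max_right _ _,
    fun x hx lam hlam => hlam0 lam (le_of_max_le_left hlam) x hx⟩

/-- Lemma B.1, `L^q` norms of the derivative of the bubble: uniformly for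
`x` in a compact subset `K ⊆ Ω` and `λ` large, `‖∂_{x_i} U_{x,λ}‖_{L^q(Ω)} ∼ ρ(q,λ)`. -/
theorem statement10 (N : ℕ) (s : ℝ) (hs0 : 0 < s) (hs1 : s < 1) (hN : 2 * s < (N : ℝ))
    (Ω : Set (Euc N)) (hΩo : IsOpen Ω) (hΩb : Bornology.IsBounded Ω)
    (K : Set (Euc N)) (hK : IsCompact K) (hKΩ : K ⊆ Ω)
    (q : ℝ) (hq : 1 ≤ q) (i : Fin N) :
    ∃ c C lam0 : ℝ, 0 < c ∧ c ≤ C ∧ 2 ≤ lam0 ∧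
      ∀ x ∈ K, ∀ lam : ℝ, lam0 ≤ lam →
        c * bubbleDxRate N s q lam ≤
            (∫ y in Ω, |bubbleDx N s i x lam y| ^ q) ^ (1 / q) ∧
          (∫ y in Ω, |bubbleDx N s i x lam y| ^ q) ^ (1 / q) ≤ C * bubbleDxRate N s q lam :=
  statement10_general N s hN Ω hΩo hΩb K hK hKΩ q hq i
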